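/- Let P be the uniform distribution on {−1, 0, 1} ⊂ ℝ. Then the sets {−1, 1/2} and {−1/2, 1} are exactly the minimizers over pairs {a₁,a₂} ⊂ ℝ of E_P[min((X−a₁)², (X−a₂)²)], and the minimal value is 1/6. -/

import Mathlib

/-!
Each of the three atoms is served by its nearer centre, so `3 * Phi6 a b` is the cost
`(-1 - x)² + y² + (1 - z)²` of an assignment of centres `x, y, z ∈ {a, b}` to `-1, 0, 1`.
With only two centres, two atoms share one. Sharing between `-1` and `1` costs at least `2`;
sharing between `-1` and `0` costs `1/2 + 2 (x + 1/2)²` plus `(1 - z)²` for the atom `1`,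
and symmetrically for `0` and `1`. So the cost is at least `1/2`, with equality exactly for the
assignments `(-1/2, -1/2, 1)` and `(-1, 1/2, 1/2)`, whose two distinct centres
must then be `a` and `b`.
-/

/-- 2-means objective for the uniform distribution on `{-1, 0, 1}`. -/
noncomputable def Phi6 (a b : ℝ) : ℝ :=
  (1 / 3) * (min ((-1 - a) ^ 2) ((-1 - b) ^ 2) + min (a ^ 2) (b ^ 2)
    + min ((1 - a) ^ 2) ((1 - b) ^ 2))

def assignCost (x y z : ℝ) : ℝ := (-1 - x) ^ 2 + y ^ 2 + (1 - z) ^ 2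

lemma exists_min_eq_apply {α β : Type*} [LinearOrder β] (f : α → β) (a b : α) :
    ∃ c, (c = a ∨ c = b) ∧ min (f a) (f b) = f c :=
  (min_choice (f a) (f b)).elim (fun h => ⟨a, .inl rfl, h⟩) (fun h => ⟨b, .inr rfl, h⟩)

lemma exists_Phi6_eq_assignCost (a b : ℝ) :
    ∃ x y z, (x = a ∨ x = b) ∧ (y = a ∨ y = b) ∧ (z = a ∨ z = b) ∧
      Phi6 a b = assignCost x y z / 3 := by
  obtain ⟨x, hx, h₁⟩ := exists_min_eq_apply (fun c : ℝ => (-1 - c) ^ 2) a b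
  obtain ⟨y, hy, h₂⟩ := exists_min_eq_apply (fun c : ℝ => c ^ 2) a b
  obtain ⟨z, hz, h₃⟩ := exists_min_eq_apply (fun c : ℝ => (1 - c) ^ 2) a b
  refine ⟨x, y, z, hx, hy, hz, ?_⟩
  rw [Phi6, h₁, h₂, h₃, assignCost]
  ring

lemma eq_or_eq_or_eq_of_mem_pair {α : Type*} {a b x y z : α}
    (hx : x = a ∨ x = b) (hy : y = a ∨ y = b) (hz : z = a ∨ z = b) :
    x = y ∨ y = z ∨ x = z := by
  rcases hx with rfl | rfl <;> rcases hy with rfl | rfl <;> rcases hz with rfl | rfl <;> simp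

lemma half_le_assignCost {x y z : ℝ} (h : x = y ∨ y = z ∨ x = z) :
    1 / 2 ≤ assignCost x y z := by
  rcases h with rfl | rfl | rfl <;> unfold assignCost
  · nlinarith [sq_nonneg (x + 1 / 2), sq_nonneg (1 - z)]
  · nlinarith [sq_nonneg (y - 1 / 2), sq_nonneg (-1 - x)]
  · nlinarith [sq_nonneg x, sq_nonneg y]

lemma assignCost_eq_half {x y z : ℝ} (h : x = y ∨ y = z ∨ x = z)
    (hcost : assignCost x y z = 1 / 2) : x = -1 / 2 ∧ z = 1 ∨ x = -1 ∧ z = 1 / 2 := by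
  rcases h with rfl | rfl | rfl <;> unfold assignCost at hcost
  · have hx : (x + 1 / 2) ^ 2 = 0 := by nlinarith [sq_nonneg (x + 1 / 2), sq_nonneg (1 - z)]
    have hz : (1 - z) ^ 2 = 0 := by nlinarith [sq_nonneg (x + 1 / 2), sq_nonneg (1 - z)]
    simp only [pow_eq_zero_iff two_ne_zero] at hx hz
    left; constructor <;> linarith
  · have hy : (y - 1 / 2) ^ 2 = 0 := by nlinarith [sq_nonneg (y - 1 / 2), sq_nonneg (-1 - x)]
    have hx : (-1 - x) ^ 2 = 0 := by nlinarith [sq_nonneg (y - 1 / 2), sq_nonneg (-1 - x)]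
    simp only [pow_eq_zero_iff two_ne_zero] at hx hy
    right; constructor <;> linarith
  · nlinarith [sq_nonneg x, sq_nonneg y]

lemma Set.pair_eq_of_ne {α : Type*} {a b x z : α}
    (hx : x = a ∨ x = b) (hz : z = a ∨ z = b) (hxz : x ≠ z) : ({a, b} : Set α) = {x, z} := by
  rcases hx with rfl | rfl <;> rcases hz with rfl | rfl
  exacts [absurd rfl hxz, rfl, Set.pair_comm _ _, absurd rfl hxz]

lemma Phi6_comm (a b : ℝ) : Phi6 a b = Phi6 b a := by
  simp only [Phi6, min_comm]

lemma Phi6_congr_pair {a b c d : ℝ} (h : ({a, b} : Set ℝ) = {c, d}) : Phi6 a b = Phi6 c d := by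
  rcases Set.pair_eq_pair_iff.mp h with ⟨rfl, rfl⟩ | ⟨rfl, rfl⟩
  exacts [rfl, Phi6_comm a b]

theorem stmt6 :
    (∀ a b : ℝ, 1 / 6 ≤ Phi6 a b) ∧
    (∀ a b : ℝ, Phi6 a b = 1 / 6 ↔
      ({a, b} : Set ℝ) = {-1, 1 / 2} ∨ ({a, b} : Set ℝ) = {-1 / 2, 1}) := by
  refine ⟨fun a b => ?_, fun a b => ⟨fun h => ?_, ?_⟩⟩
  · obtain ⟨x, y, z, hx, hy, hz, hΦ⟩ := exists_Phi6_eq_assignCost a b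
    linarith [half_le_assignCost (eq_or_eq_or_eq_of_mem_pair hx hy hz)]
  · obtain ⟨x, y, z, hx, hy, hz, hΦ⟩ := exists_Phi6_eq_assignCost a b
    rcases assignCost_eq_half (eq_or_eq_or_eq_of_mem_pair hx hy hz) (by linarith)
      with ⟨rfl, rfl⟩ | ⟨rfl, rfl⟩
    · exact .inr (Set.pair_eq_of_ne hx hz (by norm_num))
    · exact .inl (Set.pair_eq_of_ne hx hz (by norm_num))
  · rintro (h | h) <;> rw [Phi6_congr_pair h] <;> norm_num [Phi6]
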